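/- arXiv:1911.12459 — 10 statements merged into one kernel-verified Lean document; each statement's English description precedes it below -/
import Mathlib

section
/- Let 𝒫 = ([n], ⪯) be a naturally labeled poset, s = (s_1,...,s_n) positive integers, and k a positive integer. If λ ∈ k·O(𝒫,s) ∩ ℤ^n, then λ ∧ s (coordinatewise minimum with s) lies in O(𝒫,s) ∩ ℤ^n and (λ − s) ∨ 0 (coordinatewise maximum with 0) lies in (k−1)·O(𝒫,s) ∩ ℤ^n, and λ = (λ ∧ s) + ((λ − s) ∨ 0). -/
/-- The s-lecture hall order polytope `O(𝒫,s)` for a poset with order relation `r` on `Fin n`. -/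
def LHOrderPolytope (n : ℕ) (r : Fin n → Fin n → Prop) (s : Fin n → ℤ) : Set (Fin n → ℝ) :=
  {x | (∀ i j : Fin n, r i j → x i / (s i : ℝ) ≤ x j / (s j : ℝ)) ∧
       (∀ i : Fin n, 0 ≤ x i ∧ x i ≤ (s i : ℝ))}

/-- The dilate `k·P`. -/
def dilate {n : ℕ} (k : ℝ) (P : Set (Fin n → ℝ)) : Set (Fin n → ℝ) :=
  (fun p => k • p) '' P

theorem min_max_splitting_of_dilated_lattice_point
    (n : ℕ) (r : Fin n → Fin n → Prop) (hpo : IsPartialOrder (Fin n) r)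
    (hnat : ∀ i j : Fin n, r i j → i ≤ j)
    (s : Fin n → ℤ) (hs : ∀ i, 0 < s i)
    (k : ℕ) (hk : 0 < k) (lam : Fin n → ℤ)
    (hlam : (fun i => (lam i : ℝ)) ∈ dilate (k : ℝ) (LHOrderPolytope n r s)) :
    (fun i => ((min (lam i) (s i) : ℤ) : ℝ)) ∈ LHOrderPolytope n r s ∧
    (fun i => ((max (lam i - s i) 0 : ℤ) : ℝ)) ∈
      dilate ((k : ℝ) - 1) (LHOrderPolytope n r s) ∧
    ∀ i, lam i = min (lam i) (s i) + max (lam i - s i) 0 := by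
  obtain ⟨x, hx, hxe⟩ := hlam
  have hke : ∀ i, (k : ℝ) * x i = (lam i : ℝ) := fun i => congrFun hxe i
  have hkpos : (0:ℝ) < k := by exact_mod_cast hk
  have hspos : ∀ i, (0:ℝ) < (s i : ℝ) := fun i => by exact_mod_cast hs i
  have hlow : ∀ i, (0:ℝ) ≤ (lam i : ℝ) := fun i => by
    rw [← hke i]; exact mul_nonneg hkpos.le (hx.2 i).1
  have hup : ∀ i, (lam i : ℝ) ≤ (k : ℝ) * (s i : ℝ) := fun i => by
    rw [← hke i]; exact mul_le_mul_of_nonneg_left (hx.2 i).2 hkpos.le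
  have hcmp : ∀ i j, r i j → (lam i : ℝ) / (s i : ℝ) ≤ (lam j : ℝ) / (s j : ℝ) := by
    intro i j h
    rw [← hke i, ← hke j, mul_div_assoc, mul_div_assoc]
    exact mul_le_mul_of_nonneg_left (hx.1 i j h) hkpos.le
  refine ⟨⟨?_, ?_⟩, ?_, ?_⟩
  · intro i j hij
    push_cast
    have key : ∀ i : Fin n, min ((lam i : ℝ)) (s i) / (s i : ℝ)
        = min ((lam i : ℝ) / (s i : ℝ)) 1 := by
      intro i
      rw [← min_div_div_right (hspos i).le, div_self (hspos i).ne']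
    rw [key i, key j]
    exact min_le_min (hcmp i j hij) le_rfl
  · intro i
    push_cast
    exact ⟨le_min (hlow i) (hspos i).le, min_le_right _ _⟩
  · set c : ℝ := (k : ℝ) - 1 with hc
    have hc0 : 0 ≤ c := by
      have : (1:ℝ) ≤ k := by exact_mod_cast hk
      linarith
    rcases eq_or_lt_of_le hc0 with hc1 | hcpos
    · -- k = 1 case, c = 0
      refine ⟨0, ⟨fun i j _ => by simp, fun i => by simp [(hspos i).le]⟩, ?_⟩
      funext i
      have hk1 : (k : ℝ) = 1 := by linarith [hc1]
      have : (lam i : ℝ) ≤ (s i : ℝ) := by have := hup i; rw [hk1] at this; linarith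
      have hZ : lam i ≤ s i := by exact_mod_cast this
      simp [← hc1, max_eq_right (by omega : lam i - s i ≤ 0)]
    · refine ⟨fun i => max ((lam i : ℝ) - s i) 0 / c, ⟨?_, ?_⟩, ?_⟩
      · intro i j hij
        rw [div_div, div_div, mul_comm c ((s i : ℝ)), mul_comm c ((s j : ℝ)),
          ← div_div, ← div_div, div_le_div_iff_of_pos_right hcpos]
        have key : ∀ i : Fin n, max ((lam i : ℝ) - s i) 0 / (s i : ℝ)
            = max ((lam i : ℝ) / (s i : ℝ) - 1) 0 := by
          intro i
          rw [← max_div_div_right (hspos i).le, sub_div, div_self (hspos i).ne', zero_div]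
        rw [key i, key j]
        exact max_le_max (by linarith [hcmp i j hij]) le_rfl
      · intro i
        constructor
        · exact div_nonneg (le_max_right _ _) hc0
        · rw [div_le_iff₀ hcpos]
          refine max_le ?_ (mul_nonneg (hspos i).le hc0)
          have := hup i
          nlinarith [hspos i]
      · funext i
        push_cast
        simp only [Pi.smul_apply, smul_eq_mul]
        rw [mul_div_cancel₀ _ hcpos.ne']
  · intro i; omega
end

section
/- Every s-lecture hall order polytope O(𝒫,s) has the integer decomposition property: for every positive integer k and every lattice point λ ∈ k·O(𝒫,s) ∩ ℤ^n, there exist λ^(1),...,λ^(k) ∈ O(𝒫,s) ∩ ℤ^n with λ = λ^(1) + ... + λ^(k). -/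
lemma clamp_eq (l a q : ℤ) (hq : 0 ≤ q) : min l (a + q) - min l a = max 0 (min (l - a) q) := by
  omega

theorem lecture_hall_order_polytope_is_IDP
    (n : ℕ) (r : Fin n → Fin n → Prop) (hpo : IsPartialOrder (Fin n) r)
    (hnat : ∀ i j : Fin n, r i j → i ≤ j)
    (s : Fin n → ℤ) (hs : ∀ i, 0 < s i)
    (k : ℕ) (hk : 0 < k) (lam : Fin n → ℤ)
    (hlam : (fun i => (lam i : ℝ)) ∈ dilate (k : ℝ) (LHOrderPolytope n r s)) :
    ∃ f : Fin k → (Fin n → ℤ),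
      (∀ m : Fin k, (fun i => ((f m i : ℤ) : ℝ)) ∈ LHOrderPolytope n r s) ∧
      lam = ∑ m : Fin k, f m := by
  obtain ⟨x, hx, hxe⟩ := hlam
  have hxv : ∀ i, (k : ℝ) * x i = (lam i : ℝ) := by
    intro i
    have := congrFun hxe i
    simpa using this
  have hkR : (0 : ℝ) < (k : ℝ) := by exact_mod_cast hk
  -- bounds 0 ≤ λᵢ ≤ k sᵢ in ℤ
  have hlb : ∀ i, 0 ≤ lam i := by
    intro i
    have h0 := (hx.2 i).1
    have : (0 : ℝ) ≤ (lam i : ℝ) := by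
      rw [← hxv i]; positivity
    exact_mod_cast this
  have hub : ∀ i, lam i ≤ (k : ℤ) * s i := by
    intro i
    have h1 := (hx.2 i).2
    have : (lam i : ℝ) ≤ (k : ℝ) * (s i : ℝ) := by
      rw [← hxv i]
      exact mul_le_mul_of_nonneg_left h1 (le_of_lt hkR)
    exact_mod_cast this
  -- cross inequality λᵢ sⱼ ≤ λⱼ sᵢ for r i j
  have hcross : ∀ i j, r i j → lam i * s j ≤ lam j * s i := by
    intro i j hij
    have h := hx.1 i j hij
    have hsiR : (0 : ℝ) < (s i : ℝ) := by exact_mod_cast hs i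
    have hsjR : (0 : ℝ) < (s j : ℝ) := by exact_mod_cast hs j
    have h2 : x i * (s j : ℝ) ≤ x j * (s i : ℝ) := by
      rw [div_le_div_iff₀ hsiR hsjR] at h; exact h
    have h3 : (lam i : ℝ) * (s j : ℝ) ≤ (lam j : ℝ) * (s i : ℝ) := by
      rw [← hxv i, ← hxv j]
      nlinarith
    exact_mod_cast h3
  refine ⟨fun m i => min (lam i) (((m : ℤ) + 1) * s i) - min (lam i) ((m : ℤ) * s i), ?_, ?_⟩
  · intro m
    simp only [LHOrderPolytope, Set.mem_setOf_eq]
    have hclamp : ∀ i, min (lam i) (((m : ℤ) + 1) * s i) - min (lam i) ((m : ℤ) * s i)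
        = max 0 (min (lam i - (m : ℤ) * s i) (s i)) := by
      intro i
      have : ((m : ℤ) + 1) * s i = (m : ℤ) * s i + s i := by ring
      rw [this, clamp_eq _ _ _ (le_of_lt (hs i))]
    have hbound : ∀ i, 0 ≤ max 0 (min (lam i - (m : ℤ) * s i) (s i)) ∧
        max 0 (min (lam i - (m : ℤ) * s i) (s i)) ≤ s i := by
      intro i
      have := hs i
      constructor
      · exact le_max_left _ _
      · exact max_le (le_of_lt this) (min_le_right _ _)
    constructor
    · intro i j hij
      have hsiR : (0 : ℝ) < (s i : ℝ) := by exact_mod_cast hs i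
      have hsjR : (0 : ℝ) < (s j : ℝ) := by exact_mod_cast hs j
      rw [div_le_div_iff₀ hsiR hsjR]
      have keyZ : (min (lam i) (((m : ℤ) + 1) * s i) - min (lam i) ((m : ℤ) * s i)) * s j
          ≤ (min (lam j) (((m : ℤ) + 1) * s j) - min (lam j) ((m : ℤ) * s j)) * s i := by
        rw [hclamp i, hclamp j]
        have hsj0 : (0 : ℤ) ≤ s j := le_of_lt (hs j)
        have hsi0 : (0 : ℤ) ≤ s i := le_of_lt (hs i)
        rw [max_mul_of_nonneg _ _ hsj0, min_mul_of_nonneg _ _ hsj0,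
            max_mul_of_nonneg _ _ hsi0, min_mul_of_nonneg _ _ hsi0, zero_mul, zero_mul]
        apply max_le_max le_rfl
        apply min_le_min
        · have := hcross i j hij
          nlinarith [sq_nonneg ((m : ℤ))]
        · nlinarith
      exact_mod_cast keyZ
    · intro i
      have h1 := hbound i
      rw [hclamp i] at *
      constructor
      · exact_mod_cast h1.1
      · exact_mod_cast h1.2
  · funext i
    rw [Finset.sum_apply]
    have htel : ∑ m : Fin k, (min (lam i) (((m : ℤ) + 1) * s i) - min (lam i) ((m : ℤ) * s i))
        = min (lam i) ((k : ℤ) * s i) - min (lam i) (0 * s i) := by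
      rw [Fin.sum_univ_eq_sum_range
        (fun m => min (lam i) (((m : ℤ) + 1) * s i) - min (lam i) ((m : ℤ) * s i))]
      have := Finset.sum_range_sub (fun m : ℕ => min (lam i) ((m : ℤ) * s i)) k
      simpa [add_comm] using this
    rw [htel]
    have h1 : min (lam i) ((k : ℤ) * s i) = lam i := min_eq_left (hub i)
    have h2 : min (lam i) (0 * s i) = 0 := by
      rw [zero_mul]; exact min_eq_right (hlb i)
    omega
end

section
/- Every s-lecture hall simplex P_n^s has the integer decomposition property: for every positive integer k and every lattice point λ ∈ k·P_n^s ∩ ℤ^n, there exist lattice points λ^(1),...,λ^(k) ∈ P_n^s ∩ ℤ^n with λ = λ^(1) + ... + λ^(k). -/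
/-- The s-lecture hall simplex `P_n^s = {x : 0 ≤ x 1/s 1 ≤ ⋯ ≤ x n/s n ≤ 1}`. -/
def LHSimplex (n : ℕ) (s : Fin n → ℤ) : Set (Fin n → ℝ) :=
  {x | (∀ i j : Fin n, i ≤ j → x i / (s i : ℝ) ≤ x j / (s j : ℝ)) ∧
       (∀ i : Fin n, 0 ≤ x i / (s i : ℝ)) ∧ (∀ i : Fin n, x i / (s i : ℝ) ≤ 1)}

/-- Integer inequalities characterizing lattice points of `k·P_n^s`. -/
def LHQ (n : ℕ) (s : Fin n → ℤ) (k : ℤ) (l : Fin n → ℤ) : Prop :=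
  (∀ i j : Fin n, i ≤ j → l i * s j ≤ l j * s i) ∧
  (∀ i : Fin n, 0 ≤ l i) ∧ (∀ i : Fin n, l i ≤ k * s i)

lemma LHQ_key (n : ℕ) (s : Fin n → ℤ) (hs : ∀ i, 0 < s i) :
    ∀ k : ℕ, 0 < k → ∀ l : Fin n → ℤ, LHQ n s k l →
    ∃ f : Fin k → (Fin n → ℤ), (∀ m, LHQ n s 1 (f m)) ∧ l = ∑ m, f m := by
  intro k
  induction k with
  | zero => intro h; exact absurd h (lt_irrefl 0)
  | succ k ih =>
    intro _ l hl
    obtain ⟨hchain, hpos, hub⟩ := hl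
    have hub' : ∀ i, l i ≤ ((k : ℤ) + 1) * s i := by
      intro i; have := hub i; push_cast at this; linarith
    rcases Nat.eq_zero_or_pos k with hk0 | hkpos
    · subst hk0
      refine ⟨fun _ => l, fun m => ⟨hchain, hpos, ?_⟩, ?_⟩
      · intro i; show l i ≤ 1 * s i; have := hub' i; norm_num at this ⊢; linarith
      · simp
    · -- ν i = max 0 (l i - k * s i), μ i = min (l i) (k * s i)
      set ν : Fin n → ℤ := fun i => max 0 (l i - (k : ℤ) * s i) with hνdef
      set μ : Fin n → ℤ := fun i => min (l i) ((k : ℤ) * s i) with hμdef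
      have hksi : ∀ i, 0 ≤ (k : ℤ) * s i := fun i =>
        mul_nonneg (by exact_mod_cast Nat.zero_le k) (hs i).le
      have hQν : LHQ n s 1 ν := by
        refine ⟨?_, ?_, ?_⟩
        · intro i j hij
          have hc := hchain i j hij
          show max 0 (l i - (k : ℤ) * s i) * s j ≤ max 0 (l j - (k : ℤ) * s j) * s i
          rcases le_total (l i - (k : ℤ) * s i) 0 with h | h
          · rw [max_eq_left h, zero_mul]
            exact mul_nonneg (le_max_left _ _) (hs i).le
          · have hj : 0 ≤ l j - (k : ℤ) * s j := by
              nlinarith [mul_nonneg h (hs j).le, hs i, hs j]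
            rw [max_eq_right h, max_eq_right hj]
            nlinarith [hc]
        · intro i; exact le_max_left _ _
        · intro i
          show max 0 (l i - (k : ℤ) * s i) ≤ 1 * s i
          rw [one_mul]
          exact max_le (hs i).le (by linarith [hub' i])
      have hQμ : LHQ n s k μ := by
        refine ⟨?_, ?_, ?_⟩
        · intro i j hij
          have hc := hchain i j hij
          show min (l i) ((k : ℤ) * s i) * s j ≤ min (l j) ((k : ℤ) * s j) * s i
          rcases le_total (l j) ((k : ℤ) * s j) with h | h
          · rw [min_eq_left h]
            calc min (l i) ((k : ℤ) * s i) * s j ≤ l i * s j :=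
                  mul_le_mul_of_nonneg_right (min_le_left _ _) (hs j).le
              _ ≤ l j * s i := hc
          · rw [min_eq_right h]
            calc min (l i) ((k : ℤ) * s i) * s j ≤ ((k : ℤ) * s i) * s j :=
                  mul_le_mul_of_nonneg_right (min_le_right _ _) (hs j).le
              _ = ((k : ℤ) * s j) * s i := by ring
        · intro i; exact le_min (hpos i) (hksi i)
        · intro i; exact min_le_right _ _
      obtain ⟨f, hf, hsum⟩ := ih hkpos μ hQμ
      refine ⟨Fin.cons ν f, ?_, ?_⟩
      · intro m
        refine Fin.cases ?_ ?_ m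
        · simpa using hQν
        · intro m'; simpa using hf m'
      · rw [Fin.sum_cons, ← hsum]
        funext i
        show l i = ν i + μ i
        have : ν i = max 0 (l i - (k : ℤ) * s i) := rfl
        have : μ i = min (l i) ((k : ℤ) * s i) := rfl
        simp only [hνdef, hμdef, Pi.add_apply]
        generalize (k : ℤ) * s i = c
        omega

theorem lecture_hall_simplex_is_IDP
    (n : ℕ) (s : Fin n → ℤ) (hs : ∀ i, 0 < s i)
    (k : ℕ) (hk : 0 < k) (lam : Fin n → ℤ)
    (hlam : (fun i => (lam i : ℝ)) ∈ dilate (k : ℝ) (LHSimplex n s)) :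
    ∃ f : Fin k → (Fin n → ℤ),
      (∀ m : Fin k, (fun i => ((f m i : ℤ) : ℝ)) ∈ LHSimplex n s) ∧
      lam = ∑ m : Fin k, f m := by
  have hsr : ∀ i, (0 : ℝ) < (s i : ℝ) := fun i => by exact_mod_cast hs i
  have hkr : (0 : ℝ) < (k : ℝ) := by exact_mod_cast hk
  -- extract integer inequalities
  obtain ⟨p, hp, hpe⟩ := hlam
  have hpk : ∀ i, p i = (lam i : ℝ) / k := by
    intro i
    have := congrFun hpe i
    simp only [Pi.smul_apply, smul_eq_mul] at this
    field_simp
    linarith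
  obtain ⟨hc, h0, h1⟩ := hp
  have hQ : LHQ n s k lam := by
    refine ⟨?_, ?_, ?_⟩
    · intro i j hij
      have h := hc i j hij
      rw [hpk i, hpk j, div_div, div_div] at h
      have h' := (div_le_div_iff₀ (mul_pos hkr (hsr i)) (mul_pos hkr (hsr j))).mp h
      have : (lam i : ℝ) * (s j : ℝ) ≤ (lam j : ℝ) * (s i : ℝ) := by nlinarith [hkr]
      exact_mod_cast this
    · intro i
      have h := h0 i
      rw [hpk i, div_div, le_div_iff₀ (mul_pos hkr (hsr i))] at h
      have : (0 : ℝ) ≤ (lam i : ℝ) := by linarith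
      exact_mod_cast this
    · intro i
      have h := h1 i
      rw [hpk i, div_div, div_le_one (mul_pos hkr (hsr i))] at h
      have : (lam i : ℝ) ≤ (k : ℝ) * (s i : ℝ) := h
      exact_mod_cast this
  obtain ⟨f, hf, hsum⟩ := LHQ_key n s hs k hk lam hQ
  refine ⟨f, ?_, hsum⟩
  intro m
  obtain ⟨hc', h0', h1'⟩ := hf m
  refine ⟨?_, ?_, ?_⟩ <;> dsimp only
  · intro i j hij
    rw [div_le_div_iff₀ (hsr i) (hsr j)]
    exact_mod_cast hc' i j hij
  · intro i
    exact div_nonneg (by exact_mod_cast h0' i) (hsr i).le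
  · intro i
    rw [div_le_one (hsr i)]
    have := h1' i
    rw [one_mul] at this
    exact_mod_cast this
end

section
/- Let 𝒫 be a naturally labeled poset on [n] and s positive integers. For every positive integer k and every λ ∈ k·O(𝒫,s) ∩ ℤ^n, there exist λ^(1) ⊴ λ^(2) ⊴ ... ⊴ λ^(k), all in O(𝒫,s) ∩ ℤ^n, with λ = λ^(1) + ... + λ^(k), where λ ⊴ γ means λ_i ≤ γ_i for all i and γ_i = s_i whenever λ_i ≠ 0. -/
/-- The relation `λ ⊴ γ`: `λ i ≤ γ i` for all `i`, and `γ i = s i` whenever `λ i ≠ 0`. -/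
def trile {n : ℕ} (s lam gam : Fin n → ℤ) : Prop :=
  (∀ i, lam i ≤ gam i) ∧ ∀ i, lam i ≠ 0 → gam i = s i

/-!
Cut each coordinate `λ i ∈ [0, k s_i]` into `k` layers of height `s_i`: the `c`-th layer is
`min s_i (max 0 (λ i - c s_i))`, the part of `λ i` lying in `[c s_i, (c+1) s_i]`. The layers add
up to `λ i`, every lower layer is full (`= s_i`) as soon as a higher one is nonzero, and the
lecture-hall inequalities `λ i / s_i ≤ λ j / s_j` pass to each layer because
`λ i / s_i - c ≤ λ j / s_j - c` survives clamping to `[0, 1]`. Listing the layers from the top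
down gives the chain `λ^(1) ⊴ ⋯ ⊴ λ^(k)`.
-/

def layer (s a : ℤ) (c : ℕ) : ℤ := min s (max 0 (a - c * s))

section Layer

variable {s a : ℤ}

lemma layer_nonneg (hs : 0 ≤ s) (c : ℕ) : 0 ≤ layer s a c :=
  le_min hs (le_max_left _ _)

lemma layer_le (c : ℕ) : layer s a c ≤ s := min_le_left _ _

lemma layer_eq_sub (hs : 0 ≤ s) (c : ℕ) :
    layer s a c = min a ((c + 1 : ℕ) * s) - min a (c * s) := by
  rw [layer]
  push_cast
  rw [add_one_mul]
  omega

lemma sum_range_layer (hs : 0 ≤ s) (ha : 0 ≤ a) {k : ℕ} (hak : a ≤ k * s) :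
    ∑ c ∈ Finset.range k, layer s a c = a := by
  simp_rw [layer_eq_sub hs]
  rw [Finset.sum_range_sub (fun c : ℕ => min a (c * s))]
  simp [min_eq_left hak, ha]

lemma layer_anti (hs : 0 ≤ s) {c c' : ℕ} (h : c ≤ c') : layer s a c' ≤ layer s a c := by
  have : (c : ℤ) * s ≤ c' * s := mul_le_mul_of_nonneg_right (by exact_mod_cast h) hs
  unfold layer
  omega

lemma layer_eq_of_lt_of_ne_zero (hs : 0 ≤ s) {c c' : ℕ} (h : c < c')
    (hne : layer s a c' ≠ 0) : layer s a c = s := by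
  have : ((c : ℤ) + 1) * s ≤ c' * s := mul_le_mul_of_nonneg_right (by exact_mod_cast h) hs
  unfold layer at hne ⊢
  rw [add_one_mul] at this
  omega

lemma layer_mul_le_layer_mul {s' a' : ℤ} (hs : 0 ≤ s) (hs' : 0 ≤ s')
    (h : a * s' ≤ a' * s) (c : ℕ) : layer s a c * s' ≤ layer s' a' c * s := by
  rw [layer, layer, min_mul_of_nonneg _ _ hs', max_mul_of_nonneg _ _ hs',
    min_mul_of_nonneg _ _ hs, max_mul_of_nonneg _ _ hs, zero_mul, zero_mul, mul_comm s s']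
  refine min_le_min le_rfl (max_le_max le_rfl ?_)
  linarith

end Layer

section LHOrderPolytope

variable {n : ℕ} {r : Fin n → Fin n → Prop} {s : Fin n → ℤ}

lemma intCast_mem_LHOrderPolytope_iff (hs : ∀ i, 0 < s i) (μ : Fin n → ℤ) :
    (fun i => (μ i : ℝ)) ∈ LHOrderPolytope n r s ↔
      (∀ i j, r i j → μ i * s j ≤ μ j * s i) ∧ ∀ i, 0 ≤ μ i ∧ μ i ≤ s i := by
  have hsR : ∀ i, (0 : ℝ) < s i := fun i => by exact_mod_cast hs i
  simp only [LHOrderPolytope, Set.mem_ofPred_eq]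
  refine and_congr (forall₂_congr fun i j => imp_congr_right fun _ => ?_) ?_
  · rw [div_le_div_iff₀ (hsR i) (hsR j)]
    exact_mod_cast Iff.rfl
  · exact forall_congr' fun i => by norm_cast

lemma mem_dilate_LHOrderPolytope {k : ℝ} (hk : 0 ≤ k) (hs : ∀ i, 0 < s i) {y : Fin n → ℝ}
    (hy : y ∈ dilate k (LHOrderPolytope n r s)) :
    (∀ i j, r i j → y i * s j ≤ y j * s i) ∧ ∀ i, 0 ≤ y i ∧ y i ≤ k * s i := by
  obtain ⟨x, ⟨hx_ratio, hx_bounds⟩, rfl⟩ := hy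
  have hsR : ∀ i, (0 : ℝ) < s i := fun i => by exact_mod_cast hs i
  refine ⟨fun i j hij => ?_, fun i => ?_⟩
  · have h := (div_le_div_iff₀ (hsR i) (hsR j)).1 (hx_ratio i j hij)
    simp only [Pi.smul_apply, smul_eq_mul, mul_assoc]
    exact mul_le_mul_of_nonneg_left h hk
  · simp only [Pi.smul_apply, smul_eq_mul]
    exact ⟨mul_nonneg hk (hx_bounds i).1, mul_le_mul_of_nonneg_left (hx_bounds i).2 hk⟩

end LHOrderPolytope

theorem exists_chain_decomposition_general
    (n : ℕ) (r : Fin n → Fin n → Prop)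
    (s : Fin n → ℤ) (hs : ∀ i, 0 < s i)
    (k : ℕ) (lam : Fin n → ℤ)
    (hlam : (fun i => (lam i : ℝ)) ∈ dilate (k : ℝ) (LHOrderPolytope n r s)) :
    ∃ f : Fin k → (Fin n → ℤ),
      (∀ m : Fin k, (fun i => ((f m i : ℤ) : ℝ)) ∈ LHOrderPolytope n r s) ∧
      (∀ m m' : Fin k, m < m' → trile s (f m) (f m')) ∧
      lam = ∑ m : Fin k, f m := by
  obtain ⟨hcross, hbounds⟩ := mem_dilate_LHOrderPolytope (Nat.cast_nonneg k) hs hlam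
  refine ⟨fun m i => layer (s i) (lam i) m.rev, fun m => ?_, fun m m' hmm' => ?_, ?_⟩
  · rw [intCast_mem_LHOrderPolytope_iff hs]
    exact ⟨fun i j hij => layer_mul_le_layer_mul (hs i).le (hs j).le
        (by exact_mod_cast hcross i j hij) _,
      fun i => ⟨layer_nonneg (hs i).le _, layer_le _⟩⟩
  · have hrev : (m'.rev : ℕ) < m.rev := Fin.rev_lt_rev.2 hmm'
    exact ⟨fun i => layer_anti (hs i).le hrev.le,
      fun i => layer_eq_of_lt_of_ne_zero (hs i).le hrev⟩
  · funext i
    have hlam_le : lam i ≤ k * s i := by exact_mod_cast (hbounds i).2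
    rw [Finset.sum_apply]
    calc lam i = ∑ c ∈ Finset.range k, layer (s i) (lam i) c :=
          (sum_range_layer (hs i).le (by exact_mod_cast (hbounds i).1) hlam_le).symm
      _ = ∑ m : Fin k, layer (s i) (lam i) m := (Fin.sum_univ_eq_sum_range _ k).symm
      _ = ∑ m : Fin k, layer (s i) (lam i) m.rev := (Equiv.sum_comp Fin.revPerm _).symm

theorem exists_chain_decomposition
    (n : ℕ) (r : Fin n → Fin n → Prop) (hpo : IsPartialOrder (Fin n) r)
    (hnat : ∀ i j : Fin n, r i j → i ≤ j)
    (s : Fin n → ℤ) (hs : ∀ i, 0 < s i)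
    (k : ℕ) (hk : 0 < k) (lam : Fin n → ℤ)
    (hlam : (fun i => (lam i : ℝ)) ∈ dilate (k : ℝ) (LHOrderPolytope n r s)) :
    ∃ f : Fin k → (Fin n → ℤ),
      (∀ m : Fin k, (fun i => ((f m i : ℤ) : ℝ)) ∈ LHOrderPolytope n r s) ∧
      (∀ m m' : Fin k, m < m' → trile s (f m) (f m')) ∧
      lam = ∑ m : Fin k, f m :=
  exists_chain_decomposition_general n r s hs k lam hlam
end

section
/- Let 𝒫 be a naturally labeled poset on [n] and s positive integers. The decomposition of Theorem on chains is unique: if λ ∈ k·O(𝒫,s) ∩ ℤ^n and λ^(1) ⊴ ... ⊴ λ^(k) are lattice points of O(𝒫,s) summing to λ, then necessarily λ^(k) = λ ∧ s (the coordinatewise minimum of λ and s). -/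
theorem chain_decomposition_top_is_min_with_s
    (n : ℕ) (r : Fin n → Fin n → Prop) (hpo : IsPartialOrder (Fin n) r)
    (hnat : ∀ i j : Fin n, r i j → i ≤ j)
    (s : Fin n → ℤ) (hs : ∀ i, 0 < s i)
    (k : ℕ) (hk : 0 < k) (lam : Fin n → ℤ)
    (hlam : (fun i => (lam i : ℝ)) ∈ dilate (k : ℝ) (LHOrderPolytope n r s))
    (f : Fin k → (Fin n → ℤ))
    (hf : ∀ m : Fin k, (fun i => ((f m i : ℤ) : ℝ)) ∈ LHOrderPolytope n r s)
    (hchain : ∀ m m' : Fin k, m < m' → trile s (f m) (f m'))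
    (hsum : lam = ∑ m : Fin k, f m) :
    ∀ i : Fin n, f ⟨k - 1, by omega⟩ i = min (lam i) (s i) := by
  intro i
  set L : Fin k := ⟨k - 1, by omega⟩ with hL
  have hle : ∀ m : Fin k, 0 ≤ f m i ∧ f m i ≤ s i := by
    intro m
    have h := (hf m).2 i
    simp only at h
    exact ⟨by exact_mod_cast h.1, by exact_mod_cast h.2⟩
  have hsi : lam i = ∑ m : Fin k, f m i := by
    rw [hsum]; simp
  have htop : f L i ≤ lam i := by
    rw [hsi]
    exact Finset.single_le_sum (f := fun m => f m i) (fun m _ => (hle m).1)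
      (Finset.mem_univ L)
  by_cases hall : ∀ m : Fin k, m ≠ L → f m i = 0
  · have : lam i = f L i := by
      rw [hsi]
      exact Finset.sum_eq_single L (fun m _ hm => hall m hm) (by simp)
    have := (hle L).2
    omega
  · push_neg at hall
    obtain ⟨m, hm, hmne⟩ := hall
    have hmlt : m < L := by
      have h1 : m.val < k := m.isLt
      have h2 : m.val ≠ k - 1 := fun h => hm (Fin.ext h)
      exact Fin.mk_lt_mk.mpr (by omega)
    have := (hchain m L hmlt).2 i hmne
    omega
end

section
/- Let 𝒫 be a naturally labeled poset on [n] and s positive integers. Suppose λ ∈ k·O(𝒫,s) ∩ ℤ^n has the chain decomposition λ = λ^(1) + ... + λ^(k) with λ^(1) ⊴ ... ⊴ λ^(k) all in O(𝒫,s) ∩ ℤ^n. If also λ = γ^(1) + ... + γ^(m) with m ≤ k and each γ^(i) ∈ O(𝒫,s) ∩ ℤ^n, then λ^(1)_x ≤ γ^(i)_x ≤ λ^(k)_x for every coordinate x ∈ [n] and every i ∈ [m]. -/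
lemma coord_aux (k m : ℕ) (hk : 0 < k) (hmk : m ≤ k) (S : ℤ)
    (a : Fin k → ℤ) (b : Fin m → ℤ)
    (hb0 : ∀ i, 0 ≤ b i) (hbS : ∀ i, b i ≤ S)
    (ha0 : ∀ j, 0 ≤ a j)
    (hfull : ∀ j j' : Fin k, j < j' → a j ≠ 0 → a j' = S)
    (hsum : ∑ j, a j = ∑ i, b i) (i : Fin m) :
    a ⟨0, hk⟩ ≤ b i ∧ b i ≤ a ⟨k-1, by omega⟩ := by
  set first : Fin k := ⟨0, hk⟩ with hfirst
  set last : Fin k := ⟨k-1, by omega⟩ with hlast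
  have hbsplit : ∑ j, b j = b i + ∑ j ∈ Finset.univ.erase i, b j :=
    (Finset.add_sum_erase _ b (Finset.mem_univ i)).symm
  have hasplit : ∑ j, a j = a first + ∑ j ∈ Finset.univ.erase first, a j :=
    (Finset.add_sum_erase _ a (Finset.mem_univ first)).symm
  have hcarda : (Finset.univ.erase first).card = k - 1 := by
    rw [Finset.card_erase_of_mem (Finset.mem_univ _), Finset.card_univ, Fintype.card_fin]
  have hcardb : (Finset.univ.erase i).card = m - 1 := by
    rw [Finset.card_erase_of_mem (Finset.mem_univ _), Finset.card_univ, Fintype.card_fin]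
  constructor
  · by_cases h0 : a first = 0
    · rw [h0]; exact hb0 i
    · have hall : ∀ j ∈ Finset.univ.erase first, a j = S := by
        intro j hj
        have hj' : j ≠ first := (Finset.mem_erase.mp hj).1
        have : first < j := by
          have : (j : ℕ) ≠ 0 := fun h => hj' (Fin.ext h)
          simp only [Fin.lt_def, hfirst]
          omega
        exact hfull first j this h0
      have hsa : ∑ j ∈ Finset.univ.erase first, a j = ((k-1 : ℕ) : ℤ) * S := by
        rw [Finset.sum_congr rfl hall, Finset.sum_const, hcarda, nsmul_eq_mul]
      have hsb : ∑ j ∈ Finset.univ.erase i, b j ≤ ((m-1 : ℕ) : ℤ) * S := by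
        calc ∑ j ∈ Finset.univ.erase i, b j ≤ (Finset.univ.erase i).card • S :=
              Finset.sum_le_card_nsmul _ _ _ (fun j _ => hbS j)
          _ = ((m-1 : ℕ) : ℤ) * S := by rw [hcardb, nsmul_eq_mul]
      have hS0 : 0 ≤ S := le_trans (hb0 i) (hbS i)
      have hmk' : ((m-1 : ℕ) : ℤ) * S ≤ ((k-1 : ℕ) : ℤ) * S := by
        apply mul_le_mul_of_nonneg_right _ hS0
        exact_mod_cast Nat.sub_le_sub_right hmk 1
      linarith
  · by_cases hSl : a last = S
    · rw [hSl]; exact hbS i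
    · have hall : ∀ j ∈ Finset.univ.erase last, a j = 0 := by
        intro j hj
        have hj' : j ≠ last := (Finset.mem_erase.mp hj).1
        have hjl : j < last := by
          have h1 : (j : ℕ) ≠ k - 1 := fun h => hj' (Fin.ext h)
          have h2 : (j : ℕ) < k := j.isLt
          simp only [Fin.lt_def, hlast]
          omega
        by_contra h
        exact hSl (hfull j last hjl h)
      have hsa : ∑ j, a j = a last := by
        rw [← Finset.add_sum_erase _ a (Finset.mem_univ last),
          Finset.sum_eq_zero hall, add_zero]
      have hbi : b i ≤ ∑ j, b j :=
        Finset.single_le_sum (fun j _ => hb0 j) (Finset.mem_univ i)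
      omega

theorem chain_decomposition_bounds_other_decompositions
    (n : ℕ) (r : Fin n → Fin n → Prop) (hpo : IsPartialOrder (Fin n) r)
    (hnat : ∀ i j : Fin n, r i j → i ≤ j)
    (s : Fin n → ℤ) (hs : ∀ i, 0 < s i)
    (k : ℕ) (hk : 0 < k) (lam : Fin n → ℤ)
    (hlam : (fun i => (lam i : ℝ)) ∈ dilate (k : ℝ) (LHOrderPolytope n r s))
    (f : Fin k → (Fin n → ℤ))
    (hf : ∀ m : Fin k, (fun i => ((f m i : ℤ) : ℝ)) ∈ LHOrderPolytope n r s)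
    (hchain : ∀ m m' : Fin k, m < m' → trile s (f m) (f m'))
    (hsum : lam = ∑ m : Fin k, f m)
    (m : ℕ) (hm : 0 < m) (hmk : m ≤ k)
    (g : Fin m → (Fin n → ℤ))
    (hg : ∀ i : Fin m, (fun x => ((g i x : ℤ) : ℝ)) ∈ LHOrderPolytope n r s)
    (hgsum : lam = ∑ i : Fin m, g i) :
    ∀ (x : Fin n) (i : Fin m),
      f ⟨0, by omega⟩ x ≤ g i x ∧ g i x ≤ f ⟨k - 1, by omega⟩ x := by
  intro x i
  have hsumx : ∑ j : Fin k, f j x = ∑ i : Fin m, g i x := by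
    have h1 := congrFun hsum x
    have h2 := congrFun hgsum x
    rw [Finset.sum_apply] at h1
    rw [Finset.sum_apply] at h2
    rw [← h1, ← h2]
  have hb0 : ∀ j : Fin m, 0 ≤ g j x := fun j => by
    have := ((hg j).2 x).1; simp only [] at this; exact_mod_cast this
  have hbS : ∀ j : Fin m, g j x ≤ s x := fun j => by
    have := ((hg j).2 x).2; simp only [] at this; exact_mod_cast this
  have ha0 : ∀ j : Fin k, 0 ≤ f j x := fun j => by
    have := ((hf j).2 x).1; simp only [] at this; exact_mod_cast this
  have hfull : ∀ j j' : Fin k, j < j' → f j x ≠ 0 → f j' x = s x :=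
    fun j j' h hne => (hchain j j' h).2 x hne
  exact coord_aux k m hk hmk (s x) (fun j => f j x) (fun j => g j x)
    hb0 hbS ha0 hfull hsumx i
end

section
/- For a coordinate x ∈ [n], a lattice point λ ∈ k·O(𝒫,s) ∩ ℤ^n with chain decomposition λ^(1) ⊴ ... ⊴ λ^(k) satisfies λ_x > s_x if and only if λ^(i)_x > 0 for at least two distinct indices i, which happens if and only if λ^(k−1)_x > 0 and λ^(k)_x = s_x. -/
theorem chain_decomposition_exceeds_s_iff
    (n : ℕ) (r : Fin n → Fin n → Prop) (hpo : IsPartialOrder (Fin n) r)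
    (hnat : ∀ i j : Fin n, r i j → i ≤ j)
    (s : Fin n → ℤ) (hs : ∀ i, 0 < s i)
    (k : ℕ) (hk : 2 ≤ k) (lam : Fin n → ℤ)
    (hlam : (fun i => (lam i : ℝ)) ∈ dilate (k : ℝ) (LHOrderPolytope n r s))
    (f : Fin k → (Fin n → ℤ))
    (hf : ∀ m : Fin k, (fun i => ((f m i : ℤ) : ℝ)) ∈ LHOrderPolytope n r s)
    (hchain : ∀ m m' : Fin k, m < m' → trile s (f m) (f m'))
    (hsum : lam = ∑ m : Fin k, f m)
    (x : Fin n) :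
    (s x < lam x ↔ ∃ m m' : Fin k, m ≠ m' ∧ 0 < f m x ∧ 0 < f m' x) ∧
    (s x < lam x ↔ 0 < f ⟨k - 2, by omega⟩ x ∧ f ⟨k - 1, by omega⟩ x = s x) := by
  subst hsum
  have hb : ∀ m : Fin k, 0 ≤ f m x ∧ f m x ≤ s x := by
    intro m
    obtain ⟨-, h2⟩ := hf m
    have := h2 x
    simp only at this
    exact ⟨by exact_mod_cast this.1, by exact_mod_cast this.2⟩
  have hsx : (0:ℤ) < s x := hs x
  simp only [Finset.sum_apply]
  have key : s x < ∑ m, f m x ↔ ∃ m m' : Fin k, m ≠ m' ∧ 0 < f m x ∧ 0 < f m' x := by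
    constructor
    · intro h
      by_contra hc
      push_neg at hc
      by_cases hex : ∃ m0, 0 < f m0 x
      · obtain ⟨m0, hm0⟩ := hex
        have hsum0 : ∑ m, f m x = f m0 x := by
          apply Finset.sum_eq_single
          · intro m _ hm
            have := hc m0 m (Ne.symm hm) hm0
            exact le_antisymm this (hb m).1
          · intro h; exact absurd (Finset.mem_univ m0) h
        rw [hsum0] at h
        exact absurd (hb m0).2 (not_le.mpr h)
      · push_neg at hex
        have h0 : ∑ m, f m x = 0 :=
          Finset.sum_eq_zero (fun m _ => le_antisymm (hex m) (hb m).1)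
        omega
    · rintro ⟨m, m', hne, hm, hm'⟩
      rcases lt_or_gt_of_ne hne with hlt | hgt
      · have ht := hchain m m' hlt
        have hmx : f m' x = s x := ht.2 x (by omega)
        have hle : f m x + f m' x ≤ ∑ i, f i x := by
          calc f m x + f m' x = ∑ i ∈ ({m, m'} : Finset (Fin k)), f i x :=
                (Finset.sum_pair (f := fun i => f i x) hne).symm
            _ ≤ ∑ i, f i x := Finset.sum_le_sum_of_subset_of_nonneg
                (Finset.subset_univ _) (fun i _ _ => (hb i).1)
        omega
      · have ht := hchain m' m hgt
        have hmx : f m x = s x := ht.2 x (by omega)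
        have hle : f m' x + f m x ≤ ∑ i, f i x := by
          calc f m' x + f m x = ∑ i ∈ ({m', m} : Finset (Fin k)), f i x :=
                (Finset.sum_pair (f := fun i => f i x) (Ne.symm hne)).symm
            _ ≤ ∑ i, f i x := Finset.sum_le_sum_of_subset_of_nonneg
                (Finset.subset_univ _) (fun i _ _ => (hb i).1)
        omega
  refine ⟨key, key.trans ?_⟩
  set a : Fin k := ⟨k-2, by omega⟩ with ha
  set b : Fin k := ⟨k-1, by omega⟩ with hbdef
  have hab : a < b := by
    simp only [Fin.lt_def, ha, hbdef]
    omega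
  constructor
  · rintro ⟨m, m', hne, hm, hm'⟩
    wlog hlt : m < m' generalizing m m'
    · exact this m' m (Ne.symm hne) hm' hm (by omega)
    have hma : m ≤ a := by
      have h1 : m.val < m'.val := hlt
      have h2 := m'.isLt
      simp only [Fin.le_def, ha]
      omega
    have hmb : m < b := lt_of_le_of_lt hma hab
    refine ⟨?_, (hchain m b hmb).2 x (by omega)⟩
    rcases lt_or_eq_of_le hma with h | h
    · have := (hchain m a h).1 x; omega
    · rw [← h]; exact hm
  · rintro ⟨h1, h2⟩
    exact ⟨a, b, ne_of_lt hab, h1, by omega⟩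
end

section
/- Let s be weakly increasing with first-order differences in {0,1}. If x^1 ⪰_lex x^2 ⪰_lex ... ⪰_lex x^k are lattice points of A_n^s ∩ ℤ^{n+1} that are pairwise minimal (every pair {x^i, x^j} is minimal), then the whole collection {x^1,...,x^k} is minimal: for any other multiset {u^1,...,u^k} of lattice points of A_n^s with the same sum, the lexicographically sorted sequence (x^1,...,x^k) is lexicographically smallest. -/
open Finset

/-- The polytope `A_n^s ⊂ ℝ^{n+1}`, modeled by functions `ℕ → ℝ` supported on `[1, n+1]`. -/
def Ans (n : ℕ) (s : ℕ → ℤ) : Set (ℕ → ℝ) :=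
  {y | (∀ i : ℕ, (i = 0 ∨ n + 1 < i) → y i = 0) ∧
       (∀ j ∈ Finset.Icc 1 n, 0 ≤ ∑ i ∈ Finset.Icc 1 j, y i ∧
          ∑ i ∈ Finset.Icc 1 j, y i ≤ (s j : ℝ)) ∧
       (∀ j ∈ Finset.Icc 1 (n - 1),
          0 ≤ ((s (j + 1) - s j : ℤ) : ℝ) * ∑ i ∈ Finset.Icc 1 j, y i ∧
          ((s (j + 1) - s j : ℤ) : ℝ) * ∑ i ∈ Finset.Icc 1 j, y i ≤ (s j : ℝ) * y (j + 1)) ∧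
       ∑ i ∈ Finset.Icc 1 (n + 1), y i = (s (n + 1) : ℝ)}

/-- The lattice points of `A_n^s`. -/
def AnsZ (n : ℕ) (s : ℕ → ℤ) : Set (ℕ → ℤ) :=
  {z | (fun i => (z i : ℝ)) ∈ Ans n s}

/-- Lexicographic order: `x ≺_lex y` iff at the first index where they differ, `x` is smaller. -/
def LexLt (x y : ℕ → ℤ) : Prop := ∃ j : ℕ, x j < y j ∧ ∀ i < j, x i = y i

def LexGe (x y : ℕ → ℤ) : Prop := x = y ∨ LexLt y x

/-- The pair `{x, x'}` (with `x ⪰_lex x'`) is minimal: no pair `{u, v}` of lattice points of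
`A_n^s` with the same sum is lexicographically smaller (comparing sorted pairs, smaller
elements first). -/
def PairMinimal (A : Set (ℕ → ℤ)) (x x' : ℕ → ℤ) : Prop :=
  ¬ ∃ u v : ℕ → ℤ, u ∈ A ∧ v ∈ A ∧ LexGe u v ∧ u + v = x + x' ∧
      (LexLt v x' ∨ (v = x' ∧ LexLt u x))

/-- Comparison of lexicographically-decreasingly sorted `k`-tuples from the last (smallest)
position: `u` is smaller than `x` iff at the largest index where they differ, the entry of `u`
is lexicographically smaller. -/
def SeqLt (k : ℕ) (u x : Fin k → (ℕ → ℤ)) : Prop :=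
  ∃ m : Fin k, LexLt (u m) (x m) ∧ ∀ j : Fin k, m < j → u j = x j


/-!
Write `p_j(z) = z_1 + ⋯ + z_j`. If `{a, b}` is a minimal pair, then at every `j ∈ [1, n]` either
`p_j(b) = 0` or `p_j(a) = s_j`. Otherwise, with `τ = p(a) + p(b)`, the pair whose partial sums are
`min(τ, s)` and `τ - min(τ, s)` lies in `A_n^s` (this is where the differences in `{0, 1}` enter),
has the same sum, and its smaller member is lexicographically below `b`.

If now `u ≺ x`, let `m` be the last position where they differ and `j` the first index with
`p_j(u^m) < p_j(x^m)`. The partial sums at `j` have the same total over all positions and agree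
after `m`, so `p_j(x^i) < p_j(u^i)` for some `i < m`. The dichotomy for the pair `{x^i, x^m}` then
contradicts `0 ≤ p_j(u^m)` or `p_j(u^i) ≤ s_j`.
-/

def prefixSum (z : ℕ → ℤ) (c : ℕ) : ℤ := ∑ i ∈ Icc 1 c, z i

@[simp]
lemma prefixSum_zero (z : ℕ → ℤ) : prefixSum z 0 = 0 := by simp [prefixSum]

lemma prefixSum_succ (z : ℕ → ℤ) (c : ℕ) : prefixSum z (c + 1) = prefixSum z c + z (c + 1) :=
  sum_Icc_succ_top (Nat.le_add_left 1 c) z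

lemma prefixSum_congr {z w : ℕ → ℤ} {c : ℕ} (h : ∀ i ∈ Icc 1 c, z i = w i) :
    prefixSum z c = prefixSum w c :=
  sum_congr rfl h

lemma prefixSum_sum {ι : Type*} (t : Finset ι) (w : ι → ℕ → ℤ) (c : ℕ) :
    prefixSum (∑ i ∈ t, w i) c = ∑ i ∈ t, prefixSum (w i) c := by
  simp only [prefixSum, Finset.sum_apply]
  exact sum_comm

lemma lexGe_of_prefixSum_le {z w : ℕ → ℤ} (h0 : z 0 = w 0)
    (h : ∀ d, prefixSum z d ≤ prefixSum w d) : LexGe w z := by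
  classical
  refine or_iff_not_imp_left.mpr fun hne => ?_
  have hex : ∃ d, z d ≠ w d := Function.ne_iff.mp (Ne.symm hne)
  have hbelow : ∀ i < Nat.find hex, z i = w i := fun i hi => not_not.mp (Nat.find_min hex hi)
  obtain ⟨e, he⟩ : ∃ e, Nat.find hex = e + 1 :=
    Nat.exists_eq_succ_of_ne_zero fun h => Nat.find_spec hex (h ▸ h0)
  have hle := h (e + 1)
  rw [prefixSum_succ, prefixSum_succ,
    prefixSum_congr fun i hi => hbelow i (by rw [he]; exact Nat.lt_succ_of_le (mem_Icc.mp hi).2),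
    add_le_add_iff_left, ← he] at hle
  exact ⟨_, lt_of_le_of_ne hle (Nat.find_spec hex), hbelow⟩

lemma exists_prefixSum_lt_of_lexLt {u x : ℕ → ℤ} (h0 : u 0 = x 0) (h : LexLt u x) :
    ∃ c, 0 < c ∧ prefixSum u c < prefixSum x c := by
  obtain ⟨j, hlt, hbelow⟩ := h
  obtain ⟨e, rfl⟩ : ∃ e, j = e + 1 := Nat.exists_eq_succ_of_ne_zero fun h => hlt.ne (h ▸ h0)
  refine ⟨e + 1, e.succ_pos, ?_⟩
  rw [prefixSum_succ, prefixSum_succ,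
    prefixSum_congr fun i hi => hbelow i (Nat.lt_succ_of_le (mem_Icc.mp hi).2)]
  exact add_lt_add_right hlt _

lemma exists_lt_of_sum_eq_of_lt {ι M : Type*} [Fintype ι] [LinearOrder ι] [AddCommMonoid M]
    [LinearOrder M] [IsOrderedCancelAddMonoid M] {f g : ι → M} {m : ι}
    (hsum : ∑ i, f i = ∑ i, g i) (hm : f m < g m) (htail : ∀ j, m < j → f j = g j) :
    ∃ i < m, g i < f i := by
  by_contra! h
  have hle : ∀ i ∈ univ, f i ≤ g i := fun i _ => by
    rcases lt_trichotomy i m with hi | rfl | hi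
    exacts [h i hi, hm.le, (htail i hi).le]
  exact (sum_lt_sum hle ⟨m, mem_univ m, hm⟩).ne hsum

/-- The inequalities defining `A_n^s`, written in the partial sums `p j = x_1 + ⋯ + x_j`. -/
structure IsProfile (n : ℕ) (s p : ℕ → ℤ) : Prop where
  bounds : ∀ j ∈ Icc 1 n, 0 ≤ p j ∧ p j ≤ s j
  coupling_nonneg : ∀ j ∈ Icc 1 (n - 1), 0 ≤ (s (j + 1) - s j) * p j
  coupling : ∀ j ∈ Icc 1 (n - 1), (s (j + 1) - s j) * p j ≤ s j * (p (j + 1) - p j)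
  top : p (n + 1) = s (n + 1)

lemma IsProfile.congr {n : ℕ} {s p q : ℕ → ℤ} (hp : IsProfile n s p)
    (h : ∀ d ∈ Icc 1 (n + 1), p d = q d) : IsProfile n s q := by
  have h' : ∀ d, 1 ≤ d → d ≤ n + 1 → q d = p d := fun d h1 h2 => (h d (mem_Icc.mpr ⟨h1, h2⟩)).symm
  refine ⟨fun j hj => ?_, fun j hj => ?_, fun j hj => ?_, ?_⟩
  · obtain ⟨h1, h2⟩ := mem_Icc.mp hj
    rw [h' j h1 (by omega)]; exact hp.bounds j hj
  · obtain ⟨h1, h2⟩ := mem_Icc.mp hj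
    rw [h' j h1 (by omega)]; exact hp.coupling_nonneg j hj
  · obtain ⟨h1, h2⟩ := mem_Icc.mp hj
    rw [h' j h1 (by omega), h' (j + 1) (by omega) (by omega)]; exact hp.coupling j hj
  · rw [h' (n + 1) (by omega) le_rfl]; exact hp.top

lemma mem_AnsZ_iff {n : ℕ} {s z : ℕ → ℤ} :
    z ∈ AnsZ n s ↔ (∀ i, (i = 0 ∨ n + 1 < i) → z i = 0) ∧ IsProfile n s (prefixSum z) := by
  have hstep : ∀ j, prefixSum z (j + 1) - prefixSum z j = z (j + 1) := fun j => by
    rw [prefixSum_succ]; ring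
  simp only [AnsZ, Ans, Set.mem_ofPred_eq]
  norm_cast
  constructor
  · rintro ⟨hsupp, hb, hc, htop⟩
    exact ⟨hsupp, hb, fun j hj => (hc j hj).1, fun j hj => hstep j ▸ (hc j hj).2, htop⟩
  · rintro ⟨hsupp, hb, hcn, hc, htop⟩
    exact ⟨hsupp, hb, fun j hj => ⟨hcn j hj, hstep j ▸ hc j hj⟩, htop⟩

lemma prefixSum_eq_of_mem_AnsZ {n : ℕ} {s z : ℕ → ℤ} (hz : z ∈ AnsZ n s) {d : ℕ}
    (hd : n + 1 ≤ d) : prefixSum z d = s (n + 1) := by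
  obtain ⟨hsupp, hp⟩ := mem_AnsZ_iff.mp hz
  induction d, hd using Nat.le_induction with
  | base => exact hp.top
  | succ d hd ih => rw [prefixSum_succ, ih, hsupp (d + 1) (Or.inr (by omega)), add_zero]

lemma lexGe_of_prefixSum_le_of_mem_AnsZ {n : ℕ} {s z w : ℕ → ℤ} (hz : z ∈ AnsZ n s)
    (hw : w ∈ AnsZ n s) (h : ∀ d ∈ Icc 1 n, prefixSum z d ≤ prefixSum w d) : LexGe w z := by
  refine lexGe_of_prefixSum_le ?_ fun d => ?_
  · rw [(mem_AnsZ_iff.mp hz).1 0 (Or.inl rfl), (mem_AnsZ_iff.mp hw).1 0 (Or.inl rfl)]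
  · rcases Nat.eq_zero_or_pos d with rfl | hd0
    · simp
    rcases le_or_gt d n with hdn | hdn
    · exact h d (mem_Icc.mpr ⟨hd0, hdn⟩)
    · rw [prefixSum_eq_of_mem_AnsZ hz hdn, prefixSum_eq_of_mem_AnsZ hw hdn]

lemma exists_prefixSum_lt_of_lexLt_of_mem_AnsZ {n : ℕ} {s u x : ℕ → ℤ} (hu : u ∈ AnsZ n s)
    (hx : x ∈ AnsZ n s) (h : LexLt u x) : ∃ c ∈ Icc 1 n, prefixSum u c < prefixSum x c := by
  have h0 : u 0 = x 0 := by
    rw [(mem_AnsZ_iff.mp hu).1 0 (Or.inl rfl), (mem_AnsZ_iff.mp hx).1 0 (Or.inl rfl)]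
  obtain ⟨c, hc0, hlt⟩ := exists_prefixSum_lt_of_lexLt h0 h
  refine ⟨c, mem_Icc.mpr ⟨hc0, not_lt.mp fun hcn => hlt.ne ?_⟩, hlt⟩
  rw [prefixSum_eq_of_mem_AnsZ hu hcn, prefixSum_eq_of_mem_AnsZ hx hcn]

def ofPrefixSum (n : ℕ) (p : ℕ → ℤ) (d : ℕ) : ℤ :=
  if 1 ≤ d ∧ d ≤ n + 1 then p d - p (d - 1) else 0

lemma prefixSum_ofPrefixSum {n : ℕ} {p : ℕ → ℤ} (hp0 : p 0 = 0) {c : ℕ} (hc : c ≤ n + 1) :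
    prefixSum (ofPrefixSum n p) c = p c := by
  induction c with
  | zero => rw [prefixSum_zero, hp0]
  | succ c ih =>
    rw [prefixSum_succ, ih (by omega), ofPrefixSum, if_pos ⟨by omega, hc⟩, Nat.add_sub_cancel]
    ring

lemma ofPrefixSum_prefixSum {n : ℕ} {z : ℕ → ℤ} (hz : ∀ i, (i = 0 ∨ n + 1 < i) → z i = 0) :
    ofPrefixSum n (prefixSum z) = z := by
  funext d
  rw [ofPrefixSum]
  split_ifs with hd
  · obtain ⟨e, rfl⟩ : ∃ e, d = e + 1 := Nat.exists_eq_succ_of_ne_zero (by omega)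
    rw [prefixSum_succ, Nat.add_sub_cancel]; ring
  · exact (hz d (by omega)).symm

lemma ofPrefixSum_add (n : ℕ) (p q : ℕ → ℤ) :
    ofPrefixSum n (p + q) = ofPrefixSum n p + ofPrefixSum n q := by
  funext d
  simp only [ofPrefixSum, Pi.add_apply]
  split_ifs <;> ring

lemma ofPrefixSum_mem_AnsZ {n : ℕ} {s p : ℕ → ℤ} (hp0 : p 0 = 0) (hp : IsProfile n s p) :
    ofPrefixSum n p ∈ AnsZ n s := by
  refine mem_AnsZ_iff.mpr ⟨fun i hi => if_neg (by omega), hp.congr fun d hd => ?_⟩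
  exact (prefixSum_ofPrefixSum hp0 (mem_Icc.mp hd).2).symm

lemma coupling_min_of_coupling {σ σ' τ τ' : ℤ} (hσ : 0 ≤ σ) (hσ' : σ' = σ ∨ σ' = σ + 1)
    (h : (σ' - σ) * τ ≤ σ * (τ' - τ)) :
    (σ' - σ) * min τ σ ≤ σ * (min τ' σ' - min τ σ) := by
  rcases min_cases τ σ with ⟨h1, _⟩ | ⟨h1, _⟩ <;> rcases min_cases τ' σ' with ⟨h2, _⟩ | ⟨h2, _⟩ <;>
    rw [h1, h2] <;> rcases hσ' with rfl | rfl <;> nlinarith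

lemma coupling_sub_min_of_coupling {σ σ' τ τ' : ℤ} (hσ : 0 ≤ σ) (hσ' : σ' = σ ∨ σ' = σ + 1)
    (h : (σ' - σ) * τ ≤ σ * (τ' - τ)) :
    (σ' - σ) * (τ - min τ σ) ≤ σ * ((τ' - min τ' σ') - (τ - min τ σ)) := by
  rcases min_cases τ σ with ⟨h1, _⟩ | ⟨h1, _⟩ <;> rcases min_cases τ' σ' with ⟨h2, _⟩ | ⟨h2, _⟩ <;>
    rw [h1, h2] <;> rcases hσ' with rfl | rfl <;> nlinarith

def lowerPart (s τ : ℕ → ℤ) (d : ℕ) : ℤ := if d = 0 then 0 else min (τ d) (s d)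

lemma lowerPart_of_ne_zero (s τ : ℕ → ℤ) {d : ℕ} (hd : d ≠ 0) :
    lowerPart s τ d = min (τ d) (s d) :=
  if_neg hd

section Split

variable {n : ℕ} {s p q : ℕ → ℤ}

lemma IsProfile.of_bounds_of_coupling
    (hdiff : ∀ i ∈ Icc 1 (n - 1), s (i + 1) - s i = 0 ∨ s (i + 1) - s i = 1)
    (bounds : ∀ j ∈ Icc 1 n, 0 ≤ p j ∧ p j ≤ s j)
    (coupling : ∀ j ∈ Icc 1 (n - 1), (s (j + 1) - s j) * p j ≤ s j * (p (j + 1) - p j))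
    (top : p (n + 1) = s (n + 1)) : IsProfile n s p where
  bounds := bounds
  coupling_nonneg j hj := mul_nonneg (by rcases hdiff j hj with h | h <;> omega)
    (bounds j (Icc_subset_Icc_right (Nat.sub_le n 1) hj)).1
  coupling := coupling
  top := top

lemma IsProfile.coupling_add (hp : IsProfile n s p) (hq : IsProfile n s q) {j : ℕ}
    (hj : j ∈ Icc 1 (n - 1)) :
    (s (j + 1) - s j) * (p + q) j ≤ s j * ((p + q) (j + 1) - (p + q) j) := by
  simp only [Pi.add_apply]
  linarith [hp.coupling j hj, hq.coupling j hj]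

lemma isProfile_lowerPart (hpos : ∀ i ∈ Icc 1 n, 0 < s i)
    (hdiff : ∀ i ∈ Icc 1 (n - 1), s (i + 1) - s i = 0 ∨ s (i + 1) - s i = 1)
    (htop : 0 ≤ s (n + 1)) (hp : IsProfile n s p) (hq : IsProfile n s q) :
    IsProfile n s (lowerPart s (p + q)) := by
  refine .of_bounds_of_coupling hdiff (fun j hj => ?_) (fun j hj => ?_) ?_
  · have := hp.bounds j hj; have := hq.bounds j hj; have := hpos j hj
    rw [lowerPart_of_ne_zero _ _ (by grind), Pi.add_apply]
    omega
  · rw [lowerPart_of_ne_zero _ _ (by grind), lowerPart_of_ne_zero _ _ (Nat.add_one_ne_zero j)]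
    exact coupling_min_of_coupling (hpos j (Icc_subset_Icc_right (Nat.sub_le n 1) hj)).le
      (by rcases hdiff j hj with h | h <;> omega) (hp.coupling_add hq hj)
  · rw [lowerPart_of_ne_zero _ _ (Nat.add_one_ne_zero n), Pi.add_apply, hp.top, hq.top]
    omega

lemma isProfile_sub_lowerPart (hpos : ∀ i ∈ Icc 1 n, 0 < s i)
    (hdiff : ∀ i ∈ Icc 1 (n - 1), s (i + 1) - s i = 0 ∨ s (i + 1) - s i = 1)
    (htop : 0 ≤ s (n + 1)) (hp : IsProfile n s p) (hq : IsProfile n s q) :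
    IsProfile n s (p + q - lowerPart s (p + q)) := by
  refine .of_bounds_of_coupling hdiff (fun j hj => ?_) (fun j hj => ?_) ?_
  · have := hp.bounds j hj; have := hq.bounds j hj
    rw [Pi.sub_apply, lowerPart_of_ne_zero _ _ (by grind), Pi.add_apply]
    omega
  · simp only [Pi.sub_apply]
    rw [lowerPart_of_ne_zero _ _ (by grind), lowerPart_of_ne_zero _ _ (Nat.add_one_ne_zero j)]
    exact coupling_sub_min_of_coupling (hpos j (Icc_subset_Icc_right (Nat.sub_le n 1) hj)).le
      (by rcases hdiff j hj with h | h <;> omega) (hp.coupling_add hq hj)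
  · rw [Pi.sub_apply, lowerPart_of_ne_zero _ _ (Nat.add_one_ne_zero n), Pi.add_apply, hp.top,
      hq.top]
    omega

end Split

lemma PairMinimal.prefixSum_eq_zero_or_eq {n : ℕ} {s a b : ℕ → ℤ}
    (hpos : ∀ i ∈ Icc 1 n, 0 < s i)
    (hdiff : ∀ i ∈ Icc 1 (n - 1), s (i + 1) - s i = 0 ∨ s (i + 1) - s i = 1)
    (hsn1 : s (n + 1) = s n + 1) (ha : a ∈ AnsZ n s) (hb : b ∈ AnsZ n s)
    (hmin : PairMinimal (AnsZ n s) a b) {c : ℕ} (hc : c ∈ Icc 1 n) :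
    prefixSum b c = 0 ∨ prefixSum a c = s c := by
  by_contra! hne
  obtain ⟨ha0, hpa⟩ := mem_AnsZ_iff.mp ha
  obtain ⟨hb0, hpb⟩ := mem_AnsZ_iff.mp hb
  have htop : 0 ≤ s (n + 1) := by
    have := hpos n (by grind)
    omega
  set τ := prefixSum a + prefixSum b
  set L := lowerPart s τ
  have hL0 : L 0 = 0 := if_pos rfl
  have hU0 : (τ - L) 0 = 0 := by simp [τ, hL0]
  set u := ofPrefixSum n L
  set v := ofPrefixSum n (τ - L)
  have hu := ofPrefixSum_mem_AnsZ hL0 (isProfile_lowerPart hpos hdiff htop hpa hpb)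
  have hv := ofPrefixSum_mem_AnsZ hU0 (isProfile_sub_lowerPart hpos hdiff htop hpa hpb)
  have hsum : u + v = a + b := by
    rw [← ofPrefixSum_add, add_sub_cancel, ofPrefixSum_add, ofPrefixSum_prefixSum ha0,
      ofPrefixSum_prefixSum hb0]
  have hpu : ∀ d ∈ Icc 1 n, prefixSum u d = min (prefixSum a d + prefixSum b d) (s d) :=
    fun d hd => by
      rw [prefixSum_ofPrefixSum hL0 (by grind)]
      exact lowerPart_of_ne_zero s τ (by grind)
  have hpv : ∀ d ∈ Icc 1 n,
      prefixSum v d = prefixSum a d + prefixSum b d - min (prefixSum a d + prefixSum b d) (s d) :=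
    fun d hd => by
      rw [prefixSum_ofPrefixSum hU0 (by grind), Pi.sub_apply]
      exact congrArg _ (lowerPart_of_ne_zero s τ (by grind))
  have hvu : LexGe u v := lexGe_of_prefixSum_le_of_mem_AnsZ hv hu fun d hd => by
    have := hpa.bounds d hd; have := hpb.bounds d hd
    rw [hpu d hd, hpv d hd]; omega
  have hvb : LexGe b v := lexGe_of_prefixSum_le_of_mem_AnsZ hv hb fun d hd => by
    have := hpa.bounds d hd; have := hpb.bounds d hd
    rw [hpv d hd]; omega
  have hlt : prefixSum v c < prefixSum b c := by
    have := hpa.bounds c hc; have := hpb.bounds c hc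
    rw [hpv c hc]; omega
  exact hmin ⟨u, v, hu, hv, hvu, hsum, Or.inl (hvb.resolve_left fun h => hlt.ne (h ▸ rfl))⟩

theorem pairwise_minimal_implies_minimal_general
    (n : ℕ) (s : ℕ → ℤ)
    (hpos : ∀ i ∈ Finset.Icc 1 n, 0 < s i)
    (hdiff : ∀ i ∈ Finset.Icc 1 (n - 1), s (i + 1) - s i = 0 ∨ s (i + 1) - s i = 1)
    (hsn1 : s (n + 1) = s n + 1)
    (k : ℕ) (x : Fin k → (ℕ → ℤ))
    (hx : ∀ i : Fin k, x i ∈ AnsZ n s)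
    (hpairmin : ∀ i j : Fin k, i < j → PairMinimal (AnsZ n s) (x i) (x j)) :
    ∀ u : Fin k → (ℕ → ℤ), (∀ i : Fin k, u i ∈ AnsZ n s) →
      (∀ i j : Fin k, i ≤ j → LexGe (u i) (u j)) →
      (∑ i : Fin k, u i = ∑ i : Fin k, x i) →
      ¬ SeqLt k u x := by
  rintro u hu - hsum ⟨m, hlt, htail⟩
  obtain ⟨c, hc, hcm⟩ := exists_prefixSum_lt_of_lexLt_of_mem_AnsZ (hu m) (hx m) hlt
  have hsum_c : ∑ i, prefixSum (u i) c = ∑ i, prefixSum (x i) c := by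
    rw [← prefixSum_sum, ← prefixSum_sum, hsum]
  obtain ⟨i, him, hi⟩ := exists_lt_of_sum_eq_of_lt hsum_c hcm fun j hj => by rw [htail j hj]
  have hui := (mem_AnsZ_iff.mp (hu i)).2.bounds c hc
  have hum := (mem_AnsZ_iff.mp (hu m)).2.bounds c hc
  have := (hpairmin i m him).prefixSum_eq_zero_or_eq hpos hdiff hsn1 (hx i) (hx m) hc
  omega

theorem pairwise_minimal_implies_minimal
    (n : ℕ) (hn : 0 < n) (s : ℕ → ℤ)
    (hpos : ∀ i ∈ Finset.Icc 1 n, 0 < s i)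
    (hdiff : ∀ i ∈ Finset.Icc 1 (n - 1), s (i + 1) - s i = 0 ∨ s (i + 1) - s i = 1)
    (hsn1 : s (n + 1) = s n + 1)
    (k : ℕ) (hk : 0 < k) (x : Fin k → (ℕ → ℤ))
    (hx : ∀ i : Fin k, x i ∈ AnsZ n s)
    (hsorted : ∀ i j : Fin k, i ≤ j → LexGe (x i) (x j))
    (hpairmin : ∀ i j : Fin k, i < j → PairMinimal (AnsZ n s) (x i) (x j)) :
    ∀ u : Fin k → (ℕ → ℤ), (∀ i : Fin k, u i ∈ AnsZ n s) →
      (∀ i j : Fin k, i ≤ j → LexGe (u i) (u j)) →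
      (∑ i : Fin k, u i = ∑ i : Fin k, x i) →
      ¬ SeqLt k u x :=
  pairwise_minimal_implies_minimal_general n s hpos hdiff hsn1 k x hx hpairmin
end

section
/- Let s be weakly increasing positive integers with s_{n+1} := s_n + 1 and let φ(x)_i = x_i − x_{i−1} (x_0 := 0) and h(x) = (x_1,...,x_n, s_{n+1} − Σ x_i). Then the image (h∘φ)(P_n^s) equals the set of points y ∈ ℝ^{n+1} satisfying 0 ≤ y_1+...+y_j ≤ s_j for j ∈ [n], 0 ≤ (s_{j+1}−s_j)(y_1+...+y_j) ≤ s_j·y_{j+1} for j ∈ [n−1], and y_1+...+y_{n+1} = s_{n+1}. -/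
open Finset

/-- The s-lecture hall simplex `P_n^s`, modeled by functions `ℕ → ℝ` supported on `[1, n]`. -/
def PnsNat (n : ℕ) (s : ℕ → ℤ) : Set (ℕ → ℝ) :=
  {x | (∀ i : ℕ, (i = 0 ∨ n < i) → x i = 0) ∧
       (∀ i ∈ Finset.Icc 1 n, ∀ j ∈ Finset.Icc 1 n, i ≤ j →
          x i / (s i : ℝ) ≤ x j / (s j : ℝ)) ∧
       (∀ i ∈ Finset.Icc 1 n, 0 ≤ x i / (s i : ℝ)) ∧
       (∀ i ∈ Finset.Icc 1 n, x i / (s i : ℝ) ≤ 1)}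

/-- The difference map `φ(x)_i = x_i − x_{i−1}` (with `x_0 := 0`), on coordinates `1,…,n`. -/
def phiNat (n : ℕ) (x : ℕ → ℝ) : ℕ → ℝ :=
  fun i => if 1 ≤ i ∧ i ≤ n then x i - x (i - 1) else 0

/-- The homogenizing map `h(x) = (x_1, …, x_n, s_{n+1} − Σᵢ x_i)`. -/
def hNat (n : ℕ) (s : ℕ → ℤ) (x : ℕ → ℝ) : ℕ → ℝ :=
  fun i => if 1 ≤ i ∧ i ≤ n then x i
    else if i = n + 1 then (s (n + 1) : ℝ) - ∑ j ∈ Finset.Icc 1 n, x j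
    else 0

lemma sum_phiNat (n j : ℕ) (x : ℕ → ℝ) (hx0 : x 0 = 0) (hj : j ≤ n) :
    ∑ i ∈ Finset.Icc 1 j, phiNat n x i = x j := by
  induction j with
  | zero => simpa using hx0.symm
  | succ k ih =>
    rw [Finset.sum_Icc_succ_top (by omega : 1 ≤ k + 1), ih (by omega)]
    have : phiNat n x (k + 1) = x (k + 1) - x k := by
      simp [phiNat, hj]
    rw [this]; ring

theorem image_of_lecture_hall_simplex_is_Ans
    (n : ℕ) (hn : 0 < n) (s : ℕ → ℤ)
    (hpos : ∀ i ∈ Finset.Icc 1 n, 0 < s i)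
    (hmono : ∀ i ∈ Finset.Icc 1 (n - 1), s i ≤ s (i + 1))
    (hsn1 : s (n + 1) = s n + 1) :
    (fun x => hNat n s (phiNat n x)) '' PnsNat n s = Ans n s := by
  have hposR : ∀ i, 1 ≤ i → i ≤ n → (0:ℝ) < (s i : ℝ) := fun i h1 h2 => by
    exact_mod_cast hpos i (Finset.mem_Icc.mpr ⟨h1, h2⟩)
  ext y
  constructor
  · rintro ⟨x, hx, hy⟩
    obtain ⟨hsupp, hrat, hnn, hle⟩ := hx
    have hy2 : y = hNat n s (phiNat n x) := hy.symm
    subst hy2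
    have hx0 : x 0 = 0 := hsupp 0 (Or.inl rfl)
    have hsum : ∀ j, j ≤ n → ∑ i ∈ Finset.Icc 1 j, hNat n s (phiNat n x) i = x j := by
      intro j hj
      rw [← sum_phiNat n j x hx0 hj]
      apply Finset.sum_congr rfl
      intro i hi
      rw [Finset.mem_Icc] at hi
      simp [hNat, hi.1, le_trans hi.2 hj]
    have hxnn : ∀ j, 1 ≤ j → j ≤ n → (0:ℝ) ≤ x j := by
      intro j h1 h2
      have := hnn j (Finset.mem_Icc.mpr ⟨h1, h2⟩)
      have hs := hposR j h1 h2
      have h := mul_nonneg this hs.le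
      rwa [div_mul_cancel₀ _ hs.ne'] at h
    have hxle : ∀ j, 1 ≤ j → j ≤ n → x j ≤ (s j : ℝ) := by
      intro j h1 h2
      have := hle j (Finset.mem_Icc.mpr ⟨h1, h2⟩)
      exact (div_le_one (hposR j h1 h2)).mp this
    refine ⟨?_, ?_, ?_, ?_⟩
    · intro i hi
      have hc1 : ¬(1 ≤ i ∧ i ≤ n) := by omega
      have hc2 : i ≠ n + 1 := by omega
      simp [hNat, hc1, hc2]
    · intro j hj
      rw [Finset.mem_Icc] at hj
      rw [hsum j hj.2]
      exact ⟨hxnn j hj.1 hj.2, hxle j hj.1 hj.2⟩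
    · intro j hj
      rw [Finset.mem_Icc] at hj
      have hj1 : j + 1 ≤ n := by omega
      rw [hsum j (by omega)]
      have hyj1 : hNat n s (phiNat n x) (j + 1) = x (j + 1) - x j := by
        simp [hNat, phiNat, hj1]
      rw [hyj1]
      have hsm : s j ≤ s (j + 1) := hmono j (Finset.mem_Icc.mpr hj)
      have hsmR : (s j : ℝ) ≤ (s (j+1) : ℝ) := by exact_mod_cast hsm
      constructor
      · apply mul_nonneg
        · push_cast; linarith
        · exact hxnn j hj.1 (by omega)
      · have := hrat j (Finset.mem_Icc.mpr ⟨hj.1, by omega⟩) (j+1)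
          (Finset.mem_Icc.mpr ⟨by omega, hj1⟩) (by omega)
        have h1 := hposR j hj.1 (by omega)
        have h2 := hposR (j+1) (by omega) hj1
        rw [div_le_div_iff₀ h1 h2] at this
        push_cast
        nlinarith [this]
    · rw [Finset.sum_Icc_succ_top (by omega : 1 ≤ n + 1), hsum n le_rfl]
      have : hNat n s (phiNat n x) (n + 1)
          = (s (n+1) : ℝ) - ∑ j ∈ Finset.Icc 1 n, phiNat n x j := by
        have hc1 : ¬(1 ≤ n + 1 ∧ n + 1 ≤ n) := by omega
        simp [hNat, hc1]
      rw [this, sum_phiNat n n x hx0 le_rfl]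
      ring
  · rintro ⟨hsupp, hA2, hA3, hA4⟩
    obtain ⟨x, hxdef⟩ :
        ∃ x : ℕ → ℝ, x = fun i => if 1 ≤ i ∧ i ≤ n then (∑ k ∈ Finset.Icc 1 i, y k) else 0 :=
      ⟨_, rfl⟩
    have hxval : ∀ i, 1 ≤ i → i ≤ n → x i = ∑ k ∈ Finset.Icc 1 i, y k := by
      intro i h1 h2; rw [hxdef]; exact if_pos ⟨h1, h2⟩
    have hxzero : ∀ i, ¬(1 ≤ i ∧ i ≤ n) → x i = 0 := by
      intro i h; rw [hxdef]; exact if_neg h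
    have hx0 : x 0 = 0 := hxzero 0 (by omega)
    refine ⟨x, ⟨?_, ?_, ?_, ?_⟩, ?_⟩
    · intro i hi
      exact hxzero i (by omega)
    · have step : ∀ j, 1 ≤ j → j + 1 ≤ n →
          x j / (s j : ℝ) ≤ x (j+1) / (s (j+1) : ℝ) := by
        intro j h1 h2
        have h3 := (hA3 j (Finset.mem_Icc.mpr ⟨h1, by omega⟩)).2
        have hSucc : ∑ k ∈ Finset.Icc 1 (j+1), y k
            = (∑ k ∈ Finset.Icc 1 j, y k) + y (j+1) :=
          Finset.sum_Icc_succ_top (by omega) y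
        rw [hxval j h1 (by omega), hxval (j+1) (by omega) h2,
          div_le_div_iff₀ (hposR j h1 (by omega)) (hposR (j+1) (by omega) h2), hSucc]
        push_cast at h3
        nlinarith [h3]
      intro i hi j hj hij
      rw [Finset.mem_Icc] at hi hj
      have key : ∀ m, i ≤ m → m ≤ n → x i / (s i : ℝ) ≤ x m / (s m : ℝ) := by
        intro m
        induction m with
        | zero => intro h _; exact absurd h (by omega)
        | succ k ih =>
          intro hik hk
          rcases Nat.eq_or_lt_of_le hik with h | h
          · exact le_of_eq (by rw [h])
          · exact (ih (by omega) (by omega)).trans (step k (by omega) hk)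
      exact key j hij hj.2
    · intro i hi
      rw [Finset.mem_Icc] at hi
      rw [hxval i hi.1 hi.2]
      exact div_nonneg (hA2 i (Finset.mem_Icc.mpr hi)).1 (hposR i hi.1 hi.2).le
    · intro i hi
      rw [Finset.mem_Icc] at hi
      rw [hxval i hi.1 hi.2]
      exact (div_le_one (hposR i hi.1 hi.2)).mpr (hA2 i (Finset.mem_Icc.mpr hi)).2
    · funext i
      show hNat n s (phiNat n x) i = y i
      by_cases h1 : 1 ≤ i ∧ i ≤ n
      · obtain ⟨hi1, hi2⟩ := h1
        obtain ⟨k, rfl⟩ : ∃ k, i = k + 1 := ⟨i - 1, by omega⟩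
        have e1 : hNat n s (phiNat n x) (k+1) = x (k+1) - x k := by
          simp [hNat, phiNat, hi1, hi2]
        rw [e1, hxval (k+1) hi1 hi2]
        have hSucc : ∑ m ∈ Finset.Icc 1 (k+1), y m
            = (∑ m ∈ Finset.Icc 1 k, y m) + y (k+1) :=
          Finset.sum_Icc_succ_top (by omega) y
        rcases Nat.eq_zero_or_pos k with hk | hk
        · subst hk
          rw [hxzero 0 (by omega), hSucc]
          simp
        · rw [hxval k hk (by omega), hSucc]
          ring
      · by_cases h2 : i = n + 1
        · subst h2
          have e1 : hNat n s (phiNat n x) (n+1)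
              = (s (n+1) : ℝ) - ∑ j ∈ Finset.Icc 1 n, phiNat n x j := by
            simp [hNat, h1]
          rw [e1, sum_phiNat n n x hx0 le_rfl, hxval n hn le_rfl]
          rw [Finset.sum_Icc_succ_top (by omega : 1 ≤ n + 1) y] at hA4
          linarith [hA4]
        · have hyi : y i = 0 := hsupp i (by omega)
          rw [hyi]
          simp [hNat, h1, h2]
end

section
/- Let s be weakly increasing with differences in {0,1}, s_{n+1} = s_n + 1. Every lattice point z ∈ A_n^s ∩ ℤ^{n+1} has nonnegative coordinates and coordinate sum s_{n+1}; moreover, if i+1 ∈ A(s) (i.e., s_{i+1} > s_i) and z_k ≠ 0 for some k ≤ i, then z_{i+1} ≥ 1. -/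
/-!
Write `P_j = z_1 + ⋯ + z_j`. Since `s_j > 0`, the inequalities
`0 ≤ (s_{j+1} - s_j) P_j ≤ s_j z_{j+1}` force `z_{j+1} ≥ 0`;
also `z_1 = P_1 ≥ 0` and `z_{n+1} = s_{n+1} - P_n ≥ s_{n+1} - s_n = 1`.
Integrality enters in the last claim: a nonzero `z_k` with `k ≤ i` gives `P_i ≥ 1`, so at a jump
`s_{i+1} > s_i` the product `s_i z_{i+1}` is positive, and the integer `z_{i+1}` is at least `1`.
-/

open Finset

lemma Finset.one_le_sum_of_ne_zero {ι : Type*} {t : Finset ι} {f : ι → ℤ}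
    (hf : ∀ i ∈ t, 0 ≤ f i) {k : ι} (hk : k ∈ t) (hfk : f k ≠ 0) : 1 ≤ ∑ i ∈ t, f i :=
  calc 1 ≤ f k := by have := hf k hk; omega
    _ ≤ ∑ i ∈ t, f i := single_le_sum hf hk

section LatticePoints

variable {n : ℕ} {s z : ℕ → ℤ}

lemma intCast_mem_Ans_iff :
    (fun i => (z i : ℝ)) ∈ Ans n s ↔
      (∀ i : ℕ, (i = 0 ∨ n + 1 < i) → z i = 0) ∧
      (∀ j ∈ Icc 1 n, 0 ≤ ∑ i ∈ Icc 1 j, z i ∧ ∑ i ∈ Icc 1 j, z i ≤ s j) ∧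
      (∀ j ∈ Icc 1 (n - 1), 0 ≤ (s (j + 1) - s j) * ∑ i ∈ Icc 1 j, z i ∧
        (s (j + 1) - s j) * ∑ i ∈ Icc 1 j, z i ≤ s j * z (j + 1)) ∧
      ∑ i ∈ Icc 1 (n + 1), z i = s (n + 1) := by
  simp only [Ans, Set.mem_ofPred_eq]
  norm_cast

lemma one_le_last_coord_of_sum_le (hn : 0 < n) (hsn1 : s (n + 1) = s n + 1)
    (hPn : ∑ i ∈ Icc 1 n, z i ≤ s n) (hsum : ∑ i ∈ Icc 1 (n + 1), z i = s (n + 1)) :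
    1 ≤ z (n + 1) := by
  rw [sum_Icc_succ_top (by omega)] at hsum
  omega

lemma coord_nonneg_of_intCast_mem_Ans (hn : 0 < n) (hpos : ∀ i ∈ Icc 1 n, 0 < s i)
    (hsn1 : s (n + 1) = s n + 1) (hz : (fun i => (z i : ℝ)) ∈ Ans n s) (i : ℕ) :
    0 ≤ z i := by
  obtain ⟨hsupp, hpart, hjump, hsum⟩ := intCast_mem_Ans_iff.mp hz
  rcases Nat.lt_or_ge n i with hi | hi
  · obtain rfl | hi' : i = n + 1 ∨ n + 1 < i := by omega
    · have hPn := (hpart n (by simp only [mem_Icc]; omega)).2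
      have := one_le_last_coord_of_sum_le hn hsn1 hPn hsum
      omega
    · exact (hsupp i (.inr hi')).ge
  obtain rfl | rfl | ⟨j, rfl, hj⟩ : i = 0 ∨ i = 1 ∨ ∃ j, i = j + 1 ∧ j ∈ Icc 1 (n - 1) := by
    rcases i with _ | _ | j
    · exact .inl rfl
    · exact .inr (.inl rfl)
    · exact .inr (.inr ⟨j + 1, rfl, by simp only [mem_Icc]; omega⟩)
  · exact (hsupp 0 (.inl rfl)).ge
  · simpa using (hpart 1 (by simp only [mem_Icc]; omega)).1
  · obtain ⟨hlow, hup⟩ := hjump j hj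
    have hsj : 0 < s j := hpos j (by simp only [mem_Icc] at hj ⊢; omega)
    exact nonneg_of_mul_nonneg_right (hlow.trans hup) hsj

lemma one_le_coord_succ_of_intCast_mem_Ans (hpos : ∀ i ∈ Icc 1 n, 0 < s i)
    (hsn1 : s (n + 1) = s n + 1) (hz : (fun i => (z i : ℝ)) ∈ Ans n s) {i : ℕ}
    (hi : i ∈ Icc 1 n) (hsi : s i < s (i + 1)) {k : ℕ} (hk : k ∈ Icc 1 i) (hzk : z k ≠ 0) :
    1 ≤ z (i + 1) := by
  obtain ⟨-, hpart, hjump, hsum⟩ := intCast_mem_Ans_iff.mp hz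
  rw [mem_Icc] at hi
  have hn : 0 < n := by omega
  rcases hi.2.eq_or_lt with rfl | hin
  · exact one_le_last_coord_of_sum_le hn hsn1 (hpart i (by simp only [mem_Icc]; omega)).2 hsum
  have hPi : 1 ≤ ∑ m ∈ Icc 1 i, z m :=
    one_le_sum_of_ne_zero (fun m _ => coord_nonneg_of_intCast_mem_Ans hn hpos hsn1 hz m) hk hzk
  have hprod : 0 < s i * z (i + 1) :=
    calc 0 < (s (i + 1) - s i) * ∑ m ∈ Icc 1 i, z m := mul_pos (by omega) (by omega)
      _ ≤ s i * z (i + 1) := (hjump i (by simp only [mem_Icc]; omega)).2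
  exact pos_of_mul_pos_right hprod (hpos i (by simp only [mem_Icc]; omega)).le

end LatticePoints

theorem lattice_points_of_Ans_basic_properties_general
    (n : ℕ) (hn : 0 < n) (s : ℕ → ℤ)
    (hpos : ∀ i ∈ Finset.Icc 1 n, 0 < s i)
    (hsn1 : s (n + 1) = s n + 1)
    (z : ℕ → ℤ) (hz : (fun i => (z i : ℝ)) ∈ Ans n s) :
    (∀ i : ℕ, 0 ≤ z i) ∧
    (∑ i ∈ Finset.Icc 1 (n + 1), z i = s (n + 1)) ∧
    (∀ i ∈ Finset.Icc 1 n, s i < s (i + 1) →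
      (∃ k ∈ Finset.Icc 1 i, z k ≠ 0) → 1 ≤ z (i + 1)) :=
  ⟨coord_nonneg_of_intCast_mem_Ans hn hpos hsn1 hz,
    (intCast_mem_Ans_iff.mp hz).2.2.2,
    fun _ hi hsi ⟨_, hk, hzk⟩ =>
      one_le_coord_succ_of_intCast_mem_Ans hpos hsn1 hz hi hsi hk hzk⟩

theorem lattice_points_of_Ans_basic_properties
    (n : ℕ) (hn : 0 < n) (s : ℕ → ℤ)
    (hpos : ∀ i ∈ Finset.Icc 1 n, 0 < s i)
    (hdiff : ∀ i ∈ Finset.Icc 1 (n - 1), s (i + 1) - s i = 0 ∨ s (i + 1) - s i = 1)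
    (hsn1 : s (n + 1) = s n + 1)
    (z : ℕ → ℤ) (hz : (fun i => (z i : ℝ)) ∈ Ans n s) :
    (∀ i : ℕ, 0 ≤ z i) ∧
    (∑ i ∈ Finset.Icc 1 (n + 1), z i = s (n + 1)) ∧
    (∀ i ∈ Finset.Icc 1 n, s i < s (i + 1) →
      (∃ k ∈ Finset.Icc 1 i, z k ≠ 0) → 1 ≤ z (i + 1)) :=
  lattice_points_of_Ans_basic_properties_general n hn s hpos hsn1 z hz
end
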